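/- arXiv:1906.01589 — 7 statements merged into one kernel-verified Lean document; each statement's English description precedes it below -/
import Mathlib

section
/- Let C be an abelian category and consider a commutative square of monomorphisms i : x ⟶ y, j : x ⟶ z, p : z ⟶ w, q : y ⟶ w with q ∘ i = p ∘ j. Then the following are equivalent: (1) the canonical morphism z ⊔_x y ⟶ w induced from the pushout of i along j is a monomorphism; (2) the induced morphism coker(j) ⟶ coker(q) (i.e. z/x ⟶ w/y, induced on cokernels by p and q) is a monomorphism; (3) the induced morphism coker(i) ⟶ coker(p) (i.e. y/x ⟶ w/z) is a monomorphism. -/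
/-!
For a square of monomorphisms, each of the three conditions is equivalent to the square being a
pullback, i.e. to `x` being the intersection of the subobjects `y` and `z` of `w`. Given
`u : T ⟶ y` and `v : T ⟶ z` with `u ≫ q = v ≫ p`, injectivity of `z ⊔_x y ⟶ w` makes `(u, -v)`
vanish in the pushout, so it comes from `x` by exactness of `x ⟶ y ⊞ z ⟶ z ⊔_x y ⟶ 0`;
injectivity of `y/x ⟶ w/z` makes `u` vanish in `y/x`, so `u` factors through `x`.
-/

open CategoryTheory CategoryTheory.Limits

namespace CategoryTheory

variable {C : Type*} [Category C] {X₁ X₂ X₃ X₄ : C}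
  {t : X₁ ⟶ X₂} {l : X₁ ⟶ X₃} {r : X₂ ⟶ X₄} {b : X₃ ⟶ X₄}

lemma IsPullback.of_exists_lift [Mono t] (w : t ≫ r = l ≫ b)
    (h : ∀ {T : C} (u : T ⟶ X₂) (v : T ⟶ X₃), u ≫ r = v ≫ b → ∃ m, m ≫ t = u ∧ m ≫ l = v) :
    IsPullback t l r b := by
  choose lift lift_t lift_l using fun (s : PullbackCone r b) ↦ h s.fst s.snd s.condition
  exact IsPullback.of_isLimit (PullbackCone.IsLimit.mk w lift lift_t lift_l
    fun s m hm _ ↦ by rw [← cancel_mono t, hm, lift_t])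

namespace Abelian

variable [Abelian C]

lemma mono_cokernel_map_iff_isPullback [Mono t] [Mono b] (w : t ≫ r = l ≫ b) :
    Mono (cokernel.map t b l r w) ↔ IsPullback t l r b := by
  refine ⟨fun _ ↦ IsPullback.of_exists_lift w fun u v huv ↦ ?_,
    fun h ↦ mono_cokernel_map_of_isPullback h⟩
  have hu : u ≫ cokernel.π t = 0 := by
    rw [← cancel_mono (cokernel.map t b l r w)]
    simp [reassoc_of% huv]
  refine ⟨monoLift t u hu, monoLift_comp t u hu, ?_⟩
  rw [← cancel_mono b, Category.assoc, ← w, ← Category.assoc, monoLift_comp, huv]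

lemma mono_pushout_desc_iff_isPullback [Mono t] [Mono r] (w : t ≫ r = l ≫ b) :
    Mono (pushout.desc r b w) ↔ IsPullback t l r b := by
  refine ⟨fun _ ↦ IsPullback.of_exists_lift w fun u v huv ↦ ?_, fun h ↦
    (IsPushout.of_hasPushout t l).mono_of_isPullback_of_mono h _ (pushout.inl_desc _ _ _)
      (pushout.inr_desc _ _ _)⟩
  have hS : (ShortComplex.mk (biprod.lift t (-l)) (biprod.desc (pushout.inl t l) (pushout.inr t l))
      (by simp [pushout.condition])).Exact :=
    ShortComplex.exact_of_g_is_cokernel _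
      (BiproductToPushoutIsCokernel.isColimitBiproductToPushout t l)
  have : Mono (biprod.lift t (-l)) := mono_of_mono_fac (biprod.lift_fst _ _)
  have hk : biprod.lift u (-v) ≫ biprod.desc (pushout.inl t l) (pushout.inr t l) = 0 := by
    rw [← cancel_mono (pushout.desc r b w)]
    simp [pushout.inl_desc, pushout.inr_desc, huv]
  have hlift := hS.lift_f (biprod.lift u (-v)) hk
  exact ⟨hS.lift _ hk, by simpa using hlift =≫ biprod.fst, by simpa using hlift =≫ biprod.snd⟩

end Abelian

end CategoryTheory

/-- In an abelian category, for a commutative square of monomorphisms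
`i : x ⟶ y`, `j : x ⟶ z`, `q : y ⟶ w`, `p : z ⟶ w` with `i ≫ q = j ≫ p`,
the following are equivalent:
(1) the canonical morphism `z ⊔ₓ y ⟶ w` from the pushout is a monomorphism;
(2) the induced morphism `z/x ⟶ w/y` on cokernels is a monomorphism;
(3) the induced morphism `y/x ⟶ w/z` on cokernels is a monomorphism. -/
theorem stmt1 {C : Type*} [Category C] [Abelian C]
    {x y z w : C} (i : x ⟶ y) (j : x ⟶ z) (q : y ⟶ w) (p : z ⟶ w)
    [Mono i] [Mono j] [Mono q] [Mono p]
    (comm : i ≫ q = j ≫ p) :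
    List.TFAE [Mono (pushout.desc q p comm),
      Mono (cokernel.map j q i p comm.symm),
      Mono (cokernel.map i p j q comm)] := by
  tfae_have 1 ↔ 3 := by
    rw [Abelian.mono_pushout_desc_iff_isPullback, Abelian.mono_cokernel_map_iff_isPullback]
  tfae_have 2 ↔ 3 := by
    rw [Abelian.mono_cokernel_map_iff_isPullback, Abelian.mono_cokernel_map_iff_isPullback]
    exact ⟨IsPullback.flip, IsPullback.flip⟩
  tfae_finish
end

section
/- Let A be an additive category and let S be a class of cochain complexes over A which contains every contractible complex, is closed under binary biproducts, and is closed under retracts. If a complex X is a homotopy retract of a complex Y belonging to S — i.e. there exist morphisms i : X ⟶ Y and p : Y ⟶ X together with a homotopy from p ∘ i to id_X — then X belongs to S. -/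
open CategoryTheory CategoryTheory.Limits

open HomologicalComplex homotopyCofiber Preadditive Category in
/-- The homotopy cofiber of the identity is contractible. -/
noncomputable def stmt4Contraction {A : Type*} [Category A] [Preadditive A]
    [HasBinaryBiproducts A] (X : CochainComplex A ℤ) :
    Homotopy (𝟙 (homotopyCofiber (𝟙 X))) 0 where
  hom i j :=
    if hij : (ComplexShape.up ℤ).Rel j i then
      sndX (𝟙 X) i ≫ inlX (𝟙 X) i j hij else 0
  zero i j hij := dif_neg hij
  comm j := by
    have hj : (ComplexShape.up ℤ).Rel j (j + 1) := rfl
    have hj' : (ComplexShape.up ℤ).Rel (j - 1) j := by simp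
    rw [dNext_eq _ hj, prevD_eq _ hj']
    rw [dif_pos hj, dif_pos hj']
    apply ext_from_X (𝟙 X) (j + 1) j hj
    · have h2 : (ComplexShape.up ℤ).Rel (j + 1) (j + 1 + 1) := rfl
      rw [HomologicalComplex.zero_f, add_zero]
      simp only [homotopyCofiber_d, comp_add, HomologicalComplex.id_f, comp_id,
        inlX_d_assoc (𝟙 X) j (j + 1) (j + 1 + 1) hj h2]
      simp [inlX_sndX_assoc]
    · rw [HomologicalComplex.zero_f, add_zero]
      simp only [homotopyCofiber_d, comp_add, HomologicalComplex.id_f, comp_id,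
        inrX_d_assoc, Category.assoc, inrX_sndX_assoc, Category.id_comp]
      rw [inlX_d (𝟙 X) (j - 1) j (j + 1) hj' hj]
      simp

/-- Let `S` be a class of cochain complexes over an additive category which
contains every contractible complex, is closed under binary biproducts and
under retracts.  If `X` is a homotopy retract of a complex `Y ∈ S`, then
`X ∈ S`. -/
theorem stmt4 {A : Type*} [Category A] [Preadditive A] [HasBinaryBiproducts A]
    (S : Set (CochainComplex A ℤ))
    (hcontr : ∀ Z : CochainComplex A ℤ, Nonempty (Homotopy (𝟙 Z) 0) → Z ∈ S)
    (hbiprod : ∀ Z W : CochainComplex A ℤ, Z ∈ S → W ∈ S → (Z ⊞ W) ∈ S)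
    (hretract : ∀ Z W : CochainComplex A ℤ, W ∈ S →
      (∃ (a : Z ⟶ W) (r : W ⟶ Z), a ≫ r = 𝟙 Z) → Z ∈ S)
    (X Y : CochainComplex A ℤ) (hY : Y ∈ S)
    (i : X ⟶ Y) (p : Y ⟶ X) (H : Homotopy (i ≫ p) (𝟙 X)) :
    X ∈ S := by
  set C := HomologicalComplex.homotopyCofiber (𝟙 X) with hC
  have hCS : C ∈ S := hcontr C ⟨stmt4Contraction X⟩
  have hα : Homotopy (𝟙 X ≫ (𝟙 X - i ≫ p)) 0 :=
    (Homotopy.ofEq (by simp)).trans (Homotopy.equivSubZero H.symm)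
  refine hretract X (Y ⊞ C) (hbiprod Y C hY hCS)
    ⟨biprod.lift i (HomologicalComplex.homotopyCofiber.inr (𝟙 X)),
     biprod.desc p (HomologicalComplex.homotopyCofiber.desc (𝟙 X) (𝟙 X - i ≫ p) hα), ?_⟩
  rw [biprod.lift_desc, HomologicalComplex.homotopyCofiber.inr_desc]
  abel
end

section
/- Let A be an additive category and let B be a class of objects of A which contains the zero objects and is closed under isomorphisms and finite biproducts. Let X be a bounded cochain complex over A (i.e. X^n = 0 for all but finitely many n). Then every term X^n is a retract of an object of B if and only if X is a retract, in the category of cochain complexes over A, of a bounded cochain complex all of whose terms lie in B. -/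
open CategoryTheory CategoryTheory.Limits

/-! Given retractions `X^n ⟶ b^n ⟶ X^n` with `b^n ∈ B`, transport the differential of `X`
to `b` by conjugating it with them, `r^n ≫ d^n ≫ i^(n+1)`; this squares to zero because
`i ≫ r = 𝟙`, and the `i^n` and `r^n` become chain maps exhibiting `X` as a retract of the new
complex `b`. Choosing `b^n = X^n` whenever `X^n = 0` keeps `b` bounded. -/

namespace HomologicalComplex

universe v

variable {C ι : Type*} [Category.{v} C] [HasZeroMorphisms C] {c : ComplexShape ι}

def ofRetracts (X : HomologicalComplex C c) (Y : ι → C) (h : ∀ n, Retract (X.X n) (Y n)) :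
    HomologicalComplex C c where
  X := Y
  d p q := (h p).r ≫ X.d p q ≫ (h q).i
  shape p q hpq := by simp [X.shape p q hpq]
  d_comp_d' p q r _ _ := by
    simp only [Category.assoc, Retract.retract_assoc, X.d_comp_d_assoc, zero_comp, comp_zero]

def retractOfRetracts (X : HomologicalComplex C c) (Y : ι → C)
    (h : ∀ n, Retract (X.X n) (Y n)) : Retract X (X.ofRetracts Y h) where
  i := { f n := (h n).i, comm' p q _ := (h p).retract_assoc _ }
  r := { f n := (h n).r, comm' p q _ := by simp [ofRetracts] }
  retract := by ext n; exact (h n).retract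

end HomologicalComplex

theorem stmt6_general {A : Type*} [Category A] [Preadditive A] (B : Set A)
    (hzero : ∀ a : A, Limits.IsZero a → a ∈ B)
    (X : CochainComplex A ℤ) (hX : {n : ℤ | ¬ Limits.IsZero (X.X n)}.Finite) :
    (∀ n : ℤ, ∃ b ∈ B, ∃ (i : X.X n ⟶ b) (r : b ⟶ X.X n), i ≫ r = 𝟙 (X.X n)) ↔
    (∃ Z : CochainComplex A ℤ, {n : ℤ | ¬ Limits.IsZero (Z.X n)}.Finite ∧
      (∀ n : ℤ, Z.X n ∈ B) ∧ ∃ (i : X ⟶ Z) (r : Z ⟶ X), i ≫ r = 𝟙 X) := by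
  constructor
  · intro hretract
    have hzero_retract : ∀ n, ∃ b ∈ B, (IsZero (X.X n) → IsZero b) ∧ Nonempty (Retract (X.X n) b) := by
      intro n
      by_cases hn : IsZero (X.X n)
      · exact ⟨X.X n, hzero _ hn, id, ⟨Retract.refl _⟩⟩
      · obtain ⟨b, hb, i, r, hir⟩ := hretract n
        exact ⟨b, hb, hn.elim, ⟨⟨i, r, hir⟩⟩⟩
    choose b hbB hbzero hXb using hzero_retract
    let h := X.retractOfRetracts b fun n => (hXb n).some
    exact ⟨_, hX.subset fun n hn hXn => hn (hbzero n hXn), hbB, h.i, h.r, h.retract⟩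
  · rintro ⟨Z, -, hZB, i, r, hir⟩ n
    let h := (Retract.mk i r hir).map (HomologicalComplex.eval A _ n)
    exact ⟨Z.X n, hZB n, h.i, h.r, h.retract⟩

/-- Let `B` be a class of objects of an additive category `A` containing the
zero objects and closed under isomorphisms and (finite) biproducts.  A bounded
cochain complex `X` over `A` has all its terms retracts of objects of `B` if
and only if `X` is a retract, in the category of cochain complexes, of a
bounded complex all of whose terms lie in `B`. -/
theorem stmt6 {A : Type*} [Category A] [Preadditive A] [HasZeroObject A]
    [HasBinaryBiproducts A] (B : Set A)
    (hzero : ∀ a : A, Limits.IsZero a → a ∈ B)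
    (hiso : ∀ a b : A, (a ≅ b) → a ∈ B → b ∈ B)
    (hbiprod : ∀ a b : A, a ∈ B → b ∈ B → (a ⊞ b) ∈ B)
    (X : CochainComplex A ℤ) (hX : {n : ℤ | ¬ Limits.IsZero (X.X n)}.Finite) :
    (∀ n : ℤ, ∃ b ∈ B, ∃ (i : X.X n ⟶ b) (r : b ⟶ X.X n), i ≫ r = 𝟙 (X.X n)) ↔
    (∃ Z : CochainComplex A ℤ, {n : ℤ | ¬ Limits.IsZero (Z.X n)}.Finite ∧
      (∀ n : ℤ, Z.X n ∈ B) ∧ ∃ (i : X ⟶ Z) (r : Z ⟶ X), i ≫ r = 𝟙 X) :=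
  stmt6_general B hzero X hX
end

section
/- Let C be an abelian category, let i : X ⟶ Y be a morphism of cochain complexes over C which is a monomorphism in every degree, and let f : X ⟶ X′ be an arbitrary morphism of cochain complexes. Form the pushout of i along f in the category of cochain complexes, giving i′ : X′ ⟶ Y′ and f′ : Y ⟶ Y′ with i ≫ f′ = f ≫ i′. Then the induced morphism on mapping cones mappingCone(f) ⟶ mappingCone(f′) (given by mappingCone.map applied to the commutative square formed by i and i′) is a quasi-isomorphism. -/
open CategoryTheory CategoryTheory.Limits CochainComplex

namespace Stmt8Aux

open HomologicalComplex

variable {C : Type*} [Category C] [Abelian C]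

/-- The biproduct of two short exact short complexes is short exact. -/
lemma biprod_shortExact {A B K A' B' K' : C}
    {f : A ⟶ B} {g : B ⟶ K} {w : f ≫ g = 0} {f' : A' ⟶ B'} {g' : B' ⟶ K'} {w' : f' ≫ g' = 0}
    (h : (ShortComplex.mk f g w).ShortExact) (h' : (ShortComplex.mk f' g' w').ShortExact)
    (w'' : biprod.map f f' ≫ biprod.map g g' = 0) :
    (ShortComplex.mk (biprod.map f f') (biprod.map g g') w'').ShortExact := by
  have hg : Epi g := h.epi_g
  have hg' : Epi g' := h'.epi_g
  have hf : Mono f := h.mono_f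
  have hf' : Mono f' := h'.mono_f
  have hU := h.exact.gIsCokernel
  have hV := h'.exact.gIsCokernel
  refine ⟨?_⟩
  apply ShortComplex.exact_of_g_is_cokernel
  refine CokernelCofork.IsColimit.ofπ _ _
    (fun {W} σ hσ => biprod.desc
      (CokernelCofork.IsColimit.desc' hU (biprod.inl ≫ σ)
        (by have hσ' : biprod.map f f' ≫ σ = 0 := hσ
            show f ≫ biprod.inl ≫ σ = 0
            rw [← biprod.inl_map_assoc f f' σ, hσ', comp_zero])).1
      (CokernelCofork.IsColimit.desc' hV (biprod.inr ≫ σ)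
        (by have hσ' : biprod.map f f' ≫ σ = 0 := hσ
            show f' ≫ biprod.inr ≫ σ = 0
            rw [← biprod.inr_map_assoc f f' σ, hσ', comp_zero])).1)
    ?_ ?_
  · intro W σ hσ
    apply biprod.hom_ext'
    · rw [biprod.inl_map_assoc, biprod.inl_desc]
      exact (CokernelCofork.IsColimit.desc' hU _ _).2
    · rw [biprod.inr_map_assoc, biprod.inr_desc]
      exact (CokernelCofork.IsColimit.desc' hV _ _).2
  · intro W σ hσ m hm
    have hE : Epi (biprod.map g g') := inferInstance
    rw [← cancel_epi (biprod.map g g')]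
    rw [hm]
    refine (biprod.hom_ext' _ _ ?_ ?_).symm
    · rw [biprod.inl_map_assoc, biprod.inl_desc]
      exact (CokernelCofork.IsColimit.desc' hU _ _).2
    · rw [biprod.inr_map_assoc, biprod.inr_desc]
      exact (CokernelCofork.IsColimit.desc' hV _ _).2


/-- If a short exact sequence of cochain complexes has acyclic third term,
then its first map is a quasi-isomorphism. -/
lemma quasiIso_f_of_exactAt {S : ShortComplex (CochainComplex C ℤ)} (hS : S.ShortExact)
    (hX₃ : ∀ n : ℤ, S.X₃.ExactAt n) : QuasiIso S.f := by
  rw [quasiIso_iff]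
  intro n
  rw [quasiIsoAt_iff_isIso_homologyMap]
  have h1 := hS.homology_exact₁ (n - 1) n (by simp)
  have h2 := hS.homology_exact₂ n
  have z1 : IsZero (S.X₃.homology (n - 1)) := by
    rw [← exactAt_iff_isZero_homology]; exact hX₃ _
  have z2 : IsZero (S.X₃.homology n) := by
    rw [← exactAt_iff_isZero_homology]; exact hX₃ _
  have m : Mono (homologyMap S.f n) := h1.mono_g (z1.eq_of_src _ _)
  have e : Epi (homologyMap S.f n) := h2.epi_f (z2.eq_of_tgt _ _)
  exact isIso_of_mono_of_epi _

/-- Degreewise decomposition of a mapping cone. -/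
noncomputable def coneXIso {K L : CochainComplex C ℤ} (φ : K ⟶ L) (p q : ℤ) (hpq : p + 1 = q) :
    (mappingCone φ).X p ≅ K.X q ⊞ L.X p where
  hom := biprod.lift ((mappingCone.fst φ).1.v p q hpq) ((mappingCone.snd φ).v p p (add_zero p))
  inv := biprod.desc ((mappingCone.inl φ).v q p (by omega)) ((mappingCone.inr φ).f p)
  hom_inv_id := by
    rw [mappingCone.ext_from_iff φ q p hpq]
    constructor <;> simp
  inv_hom_id := by
    apply biprod.hom_ext' <;> apply biprod.hom_ext <;> simp

lemma map_f_comm {K₁ L₁ K₂ L₂ : CochainComplex C ℤ} (φ₁ : K₁ ⟶ L₁) (φ₂ : K₂ ⟶ L₂)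
    (a : K₁ ⟶ K₂) (b : L₁ ⟶ L₂) (comm : φ₁ ≫ b = a ≫ φ₂) (p q : ℤ) (hpq : p + 1 = q) :
    (mappingCone.map φ₁ φ₂ a b comm).f p ≫ (coneXIso φ₂ p q hpq).hom =
      (coneXIso φ₁ p q hpq).hom ≫ biprod.map (a.f q) (b.f p) := by
  rw [mappingCone.ext_from_iff φ₁ q p hpq]
  constructor <;> apply biprod.hom_ext <;>
    simp [coneXIso, mappingCone.map]

lemma map_eq_zero {K₁ L₁ K₂ L₂ : CochainComplex C ℤ} (φ₁ : K₁ ⟶ L₁) (φ₂ : K₂ ⟶ L₂)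
    (a : K₁ ⟶ K₂) (b : L₁ ⟶ L₂) (comm : φ₁ ≫ b = a ≫ φ₂) (ha : a = 0) (hb : b = 0) :
    mappingCone.map φ₁ φ₂ a b comm = 0 := by
  ext n
  rw [mappingCone.ext_from_iff φ₁ (n + 1) n rfl]
  constructor <;> simp [mappingCone.map, ha, hb]

end Stmt8Aux



open Stmt8Aux HomologicalComplex

set_option maxHeartbeats 1000000 in
/-- Let `i : X ⟶ Y` be a degreewise monomorphism of cochain complexes over an
abelian category and `f : X ⟶ X'` any morphism.  Form the pushout of `i` along
`f`, with `i' = pushout.inl f i : X' ⟶ Y'` and `f' = pushout.inr f i : Y ⟶ Y'`.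
Then the induced morphism on mapping cones
`mappingCone f ⟶ mappingCone f'` is a quasi-isomorphism. -/
theorem stmt8 {C : Type*} [Category C] [Abelian C]
    {X Y X' : CochainComplex C ℤ} (i : X ⟶ Y) (hi : ∀ n : ℤ, Mono (i.f n))
    (f : X ⟶ X') :
    QuasiIso (mappingCone.map f (pushout.inr f i) i (pushout.inl f i)
      pushout.condition) := by
  have hMi : Mono i := HomologicalComplex.mono_of_mono_f i hi
  set i' : X' ⟶ pushout f i := pushout.inl f i with hi'
  set f' : Y ⟶ pushout f i := pushout.inr f i with hf'
  -- degreewise, i' is a pushout of i, hence a degreewise monomorphism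
  have hi'n : ∀ n : ℤ, Mono (i'.f n) := by
    intro n
    have hP := (IsPushout.of_hasPushout f i).map (HomologicalComplex.eval C (ComplexShape.up ℤ) n)
    have := hi n
    exact Abelian.mono_inl_of_isColimit _ _ hP.isColimit
  have hMi' : Mono i' := HomologicalComplex.mono_of_mono_f i' hi'n
  -- the induced map on (complex-level) cokernels is an isomorphism
  set g : cokernel i ⟶ cokernel i' :=
    cokernel.map i i' f f' pushout.condition.symm with hg
  have hgiso : IsIso g := by
    have t1 : pushout.inl f i ≫ pushout.desc 0 (cokernel.π i) (by simp) = 0 := by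
      exact pushout.inl_desc _ _ _
    have t2 : pushout.inr f i ≫ pushout.desc 0 (cokernel.π i) (by simp) = cokernel.π i := by
      exact pushout.inr_desc _ _ _
    refine ⟨cokernel.desc i' (pushout.desc 0 (cokernel.π i) (by simp))
      (by rw [hi']; exact t1), ?_, ?_⟩
    · apply coequalizer.hom_ext
      simp [hg, hf', reassoc_of% t2]
      exact t2
    · apply coequalizer.hom_ext
      simp only [Category.comp_id, cokernel.π_desc_assoc]
      apply pushout.hom_ext <;> simp [hg, hf', hi', reassoc_of% t1, reassoc_of% t2] <;>
        exact (cokernel.condition _).symm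
  -- the columns
  have hS₁ : (ShortComplex.mk i (cokernel.π i) (cokernel.condition i)).ShortExact :=
    { exact := ShortComplex.exact_of_g_is_cokernel _ (cokernelIsCokernel i) }
  have hS₂ : (ShortComplex.mk i' (cokernel.π i') (cokernel.condition i')).ShortExact :=
    { exact := ShortComplex.exact_of_g_is_cokernel _ (cokernelIsCokernel i') }
  -- the short exact sequence of mapping cones
  have hcomm : f' ≫ cokernel.π i' = cokernel.π i ≫ g := by simp [hg]
  set τ := mappingCone.map f f' i i' pushout.condition with hτ
  set ρ := mappingCone.map f' g (cokernel.π i) (cokernel.π i') hcomm with hρ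
  have hzero : τ ≫ ρ = 0 := by
    rw [hτ, hρ, ← mappingCone.map_comp]
    exact map_eq_zero _ _ _ _ _ (cokernel.condition i) (cokernel.condition i')
  have hSc : (ShortComplex.mk τ ρ hzero).ShortExact := by
    rw [HomologicalComplex.shortExact_iff_degreewise_shortExact]
    intro n
    have e0 : i.f (n + 1) ≫ (cokernel.π i).f (n + 1) = 0 := by
      rw [← HomologicalComplex.comp_f, cokernel.condition]; simp
    have e0' : i'.f n ≫ (cokernel.π i').f n = 0 := by
      rw [← HomologicalComplex.comp_f, cokernel.condition]; simp
    have hU : (ShortComplex.mk (i.f (n + 1)) ((cokernel.π i).f (n + 1)) e0).ShortExact :=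
      (HomologicalComplex.shortExact_iff_degreewise_shortExact _).1 hS₁ (n + 1)
    have hV : (ShortComplex.mk (i'.f n) ((cokernel.π i').f n) e0').ShortExact :=
      (HomologicalComplex.shortExact_iff_degreewise_shortExact _).1 hS₂ n
    have hT := biprod_shortExact hU hV (by
      apply biprod.hom_ext' <;>
        simp [reassoc_of% e0, reassoc_of% e0'])
    exact ShortComplex.shortExact_of_iso
      (ShortComplex.isoMk (coneXIso f n (n + 1) rfl) (coneXIso f' n (n + 1) rfl)
        (coneXIso g n (n + 1) rfl)
        (map_f_comm f f' i i' pushout.condition n (n + 1) rfl).symm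
        (map_f_comm f' g (cokernel.π i) (cokernel.π i') hcomm n (n + 1) rfl).symm).symm hT
  -- the third term of this sequence, `mappingCone g`, is acyclic
  have hacy : ∀ n : ℤ, (mappingCone g).ExactAt n := by
    intro n
    have hEg : Epi g := inferInstance
    have hz : IsZero (cokernel g) := by
      rw [IsZero.iff_id_eq_zero, ← cancel_epi (cokernel.π g)]
      simp [cokernel.π_of_epi]
    have hS₃ : (ShortComplex.mk g (cokernel.π g) (cokernel.condition g)).ShortExact :=
      { exact := ShortComplex.exact_of_g_is_cokernel _ (cokernelIsCokernel g) }
    have hq := mappingCone.quasiIso_descShortComplex hS₃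
    have : IsIso (HomologicalComplex.homologyMap
        (mappingCone.descShortComplex (ShortComplex.mk g (cokernel.π g)
          (cokernel.condition g))) n) := by
      rw [← quasiIsoAt_iff_isIso_homologyMap]
      infer_instance
    rw [HomologicalComplex.exactAt_iff_isZero_homology]
    exact IsZero.of_iso ((HomologicalComplex.homologyFunctor C _ n).map_isZero hz)
      (@asIso _ _ _ _ (HomologicalComplex.homologyMap
        (mappingCone.descShortComplex (ShortComplex.mk g (cokernel.π g)
          (cokernel.condition g))) n) this)
  exact quasiIso_f_of_exactAt hSc hacy
end

section
/- Let A be an additive category with binary biproducts and consider morphisms of cochain complexes f : X ⟶ Y, f′ : X′ ⟶ Y′, a : X ⟶ X′, b : Y ⟶ Y′ with f ≫ b = a ≫ f′. If a and b are homotopy equivalences, then the induced morphism mappingCone.map f f′ a b : mappingCone(f) ⟶ mappingCone(f′) is a homotopy equivalence. -/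
/-!
The homotopy category of cochain complexes over `A` is only pretriangulated when `A` has a zero
object, so we first embed `A` fully faithfully into `Aᵒᵖ ⥤ AddCommGrpCat` by the additive Yoneda
functor. There the mapping cones of `f` and `f'` are distinguished triangles, the square `(a, b)`
extends to a morphism between them with third component the map of cones, and the five lemma for
triangles makes it an isomorphism once `a` and `b` are. The embedding induces a fully faithful
functor on homotopy categories, which reflects isomorphisms, and the isomorphisms of the homotopy
category are exactly the homotopy equivalences.
-/

open CategoryTheory CategoryTheory.Limits CochainComplex Pretriangulated HomologicalComplex

instance CategoryTheory.preadditiveYoneda_additive {C : Type*} [Category C] [Preadditive C] :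
    (preadditiveYoneda : C ⥤ Cᵒᵖ ⥤ AddCommGrpCat).Additive where
  map_add := by intros; ext; exact Preadditive.comp_add _ _ _ _ _ _

namespace CochainComplex.mappingCone

section

variable {C D : Type*} [Category C] [Category D] [Preadditive C] [Preadditive D]
  [HasBinaryBiproducts C] [HasBinaryBiproducts D] [HasZeroObject D] (G : C ⥤ D) [G.Additive]

lemma mapTriangle_triangleh_distinguished {X Y : CochainComplex C ℤ} (f : X ⟶ Y) :
    (G.mapHomotopyCategory (.up ℤ)).mapTriangle.obj (triangleh f) ∈ distTriang _ :=
  isomorphic_distinguished _ (HomotopyCategory.mappingCone_triangleh_distinguished _) _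
    (mapTrianglehIso f G)

lemma isIso_mapHomotopyCategory_map_quotient_map {X Y X' Y' : CochainComplex C ℤ}
    (f : X ⟶ Y) (f' : X' ⟶ Y') (a : X ⟶ X') (b : Y ⟶ Y') (comm : f ≫ b = a ≫ f')
    [IsIso ((HomotopyCategory.quotient C (.up ℤ)).map a)]
    [IsIso ((HomotopyCategory.quotient C (.up ℤ)).map b)] :
    IsIso ((G.mapHomotopyCategory (.up ℤ)).map
      ((HomotopyCategory.quotient C (.up ℤ)).map (map f f' a b comm))) :=
  isIso₃_of_isIso₁₂ ((G.mapHomotopyCategory (.up ℤ)).mapTriangle.map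
      ((HomotopyCategory.quotient C (.up ℤ)).mapTriangle.map (triangleMap f f' a b comm)))
    (mapTriangle_triangleh_distinguished G f) (mapTriangle_triangleh_distinguished G f')
    (Functor.map_isIso (G.mapHomotopyCategory (.up ℤ))
      ((HomotopyCategory.quotient C (.up ℤ)).map a))
    (Functor.map_isIso (G.mapHomotopyCategory (.up ℤ))
      ((HomotopyCategory.quotient C (.up ℤ)).map b))

end

lemma map_mem_homotopyEquivalences {C : Type*} [Category C] [Preadditive C]
    [HasBinaryBiproducts C] {X Y X' Y' : CochainComplex C ℤ} (f : X ⟶ Y) (f' : X' ⟶ Y')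
    (a : X ⟶ X') (b : Y ⟶ Y') (comm : f ≫ b = a ≫ f')
    (ha : homotopyEquivalences C (.up ℤ) a) (hb : homotopyEquivalences C (.up ℤ) b) :
    homotopyEquivalences C (.up ℤ) (map f f' a b comm) := by
  rw [← isIso_quotient_map_iff_homotopyEquivalences] at ha hb ⊢
  have := isIso_mapHomotopyCategory_map_quotient_map preadditiveYoneda f f' a b comm
  exact isIso_of_fully_faithful (preadditiveYoneda.mapHomotopyCategory (.up ℤ)) _

end CochainComplex.mappingCone

/-- Given a commutative square `f ≫ b = a ≫ f'` of morphisms of cochain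
complexes over an additive category with binary biproducts, if `a` and `b`
are homotopy equivalences then the induced morphism
`mappingCone.map f f' a b : mappingCone f ⟶ mappingCone f'` is a homotopy
equivalence. -/
theorem stmt13 {A : Type*} [Category A] [Preadditive A] [HasBinaryBiproducts A]
    {X Y X' Y' : CochainComplex A ℤ} (f : X ⟶ Y) (f' : X' ⟶ Y')
    (a : X ⟶ X') (b : Y ⟶ Y') (comm : f ≫ b = a ≫ f')
    (ha : ∃ ea : HomotopyEquiv X X', ea.hom = a)
    (hb : ∃ eb : HomotopyEquiv Y Y', eb.hom = b) :
    ∃ e : HomotopyEquiv (mappingCone f) (mappingCone f'),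
      e.hom = mappingCone.map f f' a b comm :=
  mappingCone.map_mem_homotopyEquivalences f f' a b comm ha hb
end

section
/- Let C be an abelian category and let X and Z be cochain complexes over C. The following are equivalent: (1) there exist a cochain complex Y and quasi-isomorphisms f : Y ⟶ X and g : Y ⟶ Z; (2) there exist a cochain complex W and quasi-isomorphisms f′ : X ⟶ W and g′ : Z ⟶ W. -/
/-!
In the homotopy category `K(C)` the quasi-isomorphisms are the morphisms whose cone is acyclic,
so they admit both a left and a right calculus of fractions. The Ore conditions turn a span of
quasi-isomorphisms into a commuting cospan whose one leg is a quasi-isomorphism, and conversely;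
two-out-of-three makes the other leg a quasi-isomorphism too. Since `C(C) ⥤ K(C)` is full, is the
identity on objects, and detects quasi-isomorphisms, everything lifts back to cochain complexes.
-/

open CategoryTheory

namespace CategoryTheory.MorphismProperty

variable {D : Type*} [Category D] {W : MorphismProperty D}

lemma exists_cospan_of_span [W.HasLeftCalculusOfFractions] [W.HasOfPrecompProperty W]
    {X Y Z : D} {f : Y ⟶ X} {g : Y ⟶ Z} (hf : W f) (hg : W g) :
    ∃ (T : D) (f' : X ⟶ T) (g' : Z ⟶ T), W f' ∧ W g' ∧ f ≫ f' = g ≫ g' := by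
  obtain ⟨ψ, fac⟩ := (RightFraction.mk f hf g).exists_leftFraction
  have hfψ : W (f ≫ ψ.f) := fac ▸ W.comp_mem g ψ.s hg ψ.hs
  exact ⟨ψ.Y', ψ.f, ψ.s, W.of_precomp f ψ.f hf hfψ, ψ.hs, fac.symm⟩

lemma exists_span_of_cospan [W.HasRightCalculusOfFractions] [W.HasOfPostcompProperty W]
    {X Y Z : D} {f : X ⟶ Y} {g : Z ⟶ Y} (hf : W f) (hg : W g) :
    ∃ (T : D) (f' : T ⟶ X) (g' : T ⟶ Z), W f' ∧ W g' ∧ f' ≫ f = g' ≫ g := by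
  obtain ⟨ψ, fac⟩ := (LeftFraction.mk f g hg).exists_rightFraction
  have hψg : W (ψ.f ≫ g) := fac ▸ W.comp_mem ψ.s f ψ.hs hf
  exact ⟨ψ.X', ψ.s, ψ.f, ψ.hs, W.of_postcomp ψ.f g hg hψg, fac⟩

end CategoryTheory.MorphismProperty

namespace HomotopyCategory

section

variable {C ι : Type*} [Category C] [Preadditive C] [CategoryWithHomology C]
  {c : ComplexShape ι}

instance : (quasiIso C c).HasTwoOutOfThreeProperty where
  of_postcomp f g hg hfg i :=
    (MorphismProperty.isomorphisms C).of_postcomp _ _ (hg i) (by simpa using hfg i)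
  of_precomp f g hf hfg i :=
    (MorphismProperty.isomorphisms C).of_precomp _ _ (hf i) (by simpa using hfg i)

lemma quotient_map_mem_quasiIso_iff_quasiIso {K L : HomologicalComplex C c} (φ : K ⟶ L) :
    quasiIso C c ((quotient C c).map φ) ↔ QuasiIso φ := by
  rw [quotient_map_mem_quasiIso_iff, HomologicalComplex.mem_quasiIso_iff]

end

variable {C : Type*} [Category C] [Abelian C]

instance : (quasiIso C (ComplexShape.up ℤ)).HasLeftCalculusOfFractions := by
  rw [quasiIso_eq_trW_subcategoryAcyclic]
  infer_instance

instance : (quasiIso C (ComplexShape.up ℤ)).HasRightCalculusOfFractions := by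
  rw [quasiIso_eq_trW_subcategoryAcyclic]
  infer_instance

end HomotopyCategory

open HomotopyCategory MorphismProperty in
/-- For cochain complexes `X` and `Z` over an abelian category, there exists a
complex `Y` with quasi-isomorphisms `Y ⟶ X` and `Y ⟶ Z` if and only if there
exists a complex `W` with quasi-isomorphisms `X ⟶ W` and `Z ⟶ W`. -/
theorem stmt14 {C : Type*} [Category C] [Abelian C]
    (X Z : CochainComplex C ℤ) :
    (∃ (Y : CochainComplex C ℤ) (f : Y ⟶ X) (g : Y ⟶ Z),
      QuasiIso f ∧ QuasiIso g) ↔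
    (∃ (W : CochainComplex C ℤ) (f' : X ⟶ W) (g' : Z ⟶ W),
      QuasiIso f' ∧ QuasiIso g') := by
  have hQ {K L : CochainComplex C ℤ} (φ : K ⟶ L) := quotient_map_mem_quasiIso_iff_quasiIso φ
  constructor
  · rintro ⟨Y, f, g, hf, hg⟩
    obtain ⟨⟨W⟩, f', g', hf', hg', -⟩ := exists_cospan_of_span ((hQ f).2 hf) ((hQ g).2 hg)
    obtain ⟨f', rfl⟩ := (quotient C _).map_surjective f'
    obtain ⟨g', rfl⟩ := (quotient C _).map_surjective g'
    exact ⟨W, f', g', (hQ f').1 hf', (hQ g').1 hg'⟩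
  · rintro ⟨W, f', g', hf', hg'⟩
    obtain ⟨⟨Y⟩, f, g, hf, hg, -⟩ := exists_span_of_cospan ((hQ f').2 hf') ((hQ g').2 hg')
    obtain ⟨f, rfl⟩ := (quotient C _).map_surjective f
    obtain ⟨g, rfl⟩ := (quotient C _).map_surjective g
    exact ⟨Y, f, g, (hQ f).1 hf, (hQ g).1 hg⟩
end

section
/- Let C be an abelian category, a an object of C, and let x ≤ z and y ≤ u be subobjects of a. For subobjects s ≤ t of a, write t/s for the cokernel of the inclusion of underlying objects s ⟶ t. Then there is a short exact sequence 0 ⟶ (z ⊓ u)/(x ⊓ y) ⟶ (z/x) ⊞ (u/y) ⟶ (z ⊔ u)/(x ⊔ y) ⟶ 0, in which the first map has components the morphisms induced on cokernels by the inclusions z⊓u ≤ z and (with a minus sign) z⊓u ≤ u (using x⊓y ≤ z⊓u), and the second map has components the morphisms induced on cokernels by the inclusions z ≤ z⊔u and u ≤ z⊔u (using x ≤ x⊔y and y ≤ x⊔y). -/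
open CategoryTheory CategoryTheory.Limits ZeroObject

namespace Stmt19Aux

variable {C : Type*} [Category C] [Abelian C] {a : C}

/-- first map of the Mayer-Vietoris short exact sequence of subobjects -/
noncomputable def MVf (s t : Subobject a) :
    ((s ⊓ t : Subobject a) : C) ⟶ (s : C) ⊞ (t : C) :=
  biprod.lift (Subobject.ofLE _ s inf_le_left) (-(Subobject.ofLE _ t inf_le_right))

/-- second map of the Mayer-Vietoris short exact sequence of subobjects -/
noncomputable def MVg (s t : Subobject a) :
    (s : C) ⊞ (t : C) ⟶ ((s ⊔ t : Subobject a) : C) :=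
  biprod.desc (Subobject.ofLE s _ le_sup_left) (Subobject.ofLE t _ le_sup_right)

lemma MV_w (s t : Subobject a) : MVf s t ≫ MVg s t = 0 := by
  simp [MVf, MVg, biprod.lift_desc, Subobject.ofLE_comp_ofLE]

/-- the Mayer-Vietoris short complex -/
noncomputable abbrev MV (s t : Subobject a) : ShortComplex C :=
  ShortComplex.mk _ _ (MV_w s t)

lemma mono_MVf (s t : Subobject a) : Mono (MVf s t) := by
  have h : MVf s t ≫ biprod.fst = Subobject.ofLE _ s inf_le_left := by simp [MVf]
  have : Mono (MVf s t ≫ biprod.fst) := by rw [h]; infer_instance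
  exact mono_of_mono _ biprod.fst

lemma epi_MVg (s t : Subobject a) : Epi (MVg s t) := by
  apply Preadditive.epi_of_cancel_zero
  intro W c hc
  have h₁ : Subobject.ofLE s (s ⊔ t) le_sup_left ≫ c = 0 := by
    simpa [MVg] using biprod.inl ≫= hc
  have h₂ : Subobject.ofLE t (s ⊔ t) le_sup_right ≫ c = 0 := by
    simpa [MVg] using biprod.inr ≫= hc
  have hs : s ≤ Subobject.mk (kernel.ι c ≫ (s ⊔ t).arrow) :=
    Subobject.le_mk_of_comm (kernel.lift c (Subobject.ofLE s _ le_sup_left) h₁)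
      (by rw [← Category.assoc, kernel.lift_ι, Subobject.ofLE_arrow])
  have ht : t ≤ Subobject.mk (kernel.ι c ≫ (s ⊔ t).arrow) :=
    Subobject.le_mk_of_comm (kernel.lift c (Subobject.ofLE t _ le_sup_right) h₂)
      (by rw [← Category.assoc, kernel.lift_ι, Subobject.ofLE_arrow])
  have hw : s ⊔ t ≤ Subobject.mk (kernel.ι c ≫ (s ⊔ t).arrow) := sup_le hs ht
  set m : ((s ⊔ t : Subobject a) : C) ⟶ kernel c :=
    Subobject.ofLE _ _ hw ≫ (Subobject.underlyingIso (kernel.ι c ≫ (s ⊔ t).arrow)).hom with hm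
  have hmk : m ≫ kernel.ι c ≫ (s ⊔ t).arrow = (s ⊔ t).arrow := by
    rw [hm, Category.assoc, Subobject.underlyingIso_hom_comp_eq_mk, Subobject.ofLE_arrow]
  have hmι : m ≫ kernel.ι c = 𝟙 _ := by
    rw [← cancel_mono (s ⊔ t).arrow, Category.assoc, hmk, Category.id_comp]
  calc c = (m ≫ kernel.ι c) ≫ c := by rw [hmι, Category.id_comp]
    _ = 0 := by rw [Category.assoc, kernel.condition, comp_zero]

lemma MV_exact (s t : Subobject a) : (MV s t).Exact := by
  rw [ShortComplex.exact_iff_exact_up_to_refinements]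
  intro A x₂ hx₂
  have key : x₂ ≫ biprod.fst ≫ s.arrow + x₂ ≫ biprod.snd ≫ t.arrow = 0 := by
    have := hx₂ =≫ (s ⊔ t).arrow
    rw [Category.assoc, zero_comp] at this
    simpa [MV, MVg, biprod.desc_eq, Preadditive.add_comp, Category.assoc,
      Subobject.ofLE_arrow] using this
  have hfs : s.Factors (x₂ ≫ biprod.fst ≫ s.arrow) :=
    (Subobject.factors_iff _ _).2 ⟨x₂ ≫ biprod.fst, by simp⟩
  have hft : t.Factors (x₂ ≫ biprod.fst ≫ s.arrow) :=
    (Subobject.factors_iff _ _).2 ⟨-(x₂ ≫ biprod.snd), by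
      change (-(x₂ ≫ biprod.snd)) ≫ t.arrow = _
      simp only [Preadditive.neg_comp, Category.assoc]
      exact neg_eq_of_add_eq_zero_left key⟩
  have hf : (s ⊓ t).Factors (x₂ ≫ biprod.fst ≫ s.arrow) :=
    (Subobject.inf_factors _).2 ⟨hfs, hft⟩
  refine ⟨A, 𝟙 A, inferInstance, (s ⊓ t).factorThru _ hf, ?_⟩
  rw [Category.id_comp]
  apply biprod.hom_ext
  · rw [← cancel_mono s.arrow]
    simp [MV, MVf, Subobject.ofLE_arrow]
  · rw [← cancel_mono t.arrow]
    dsimp [MV, MVf]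
    simp only [Category.assoc, biprod.lift_snd, Preadditive.comp_neg, Preadditive.neg_comp]
    rw [Subobject.ofLE_arrow, Subobject.factorThru_arrow]
    exact eq_neg_of_add_eq_zero_right key


section

variable (x z y u : Subobject a) (hxz : x ≤ z) (hyu : y ≤ u)

/-- first map of the sequence of cokernels -/
noncomputable def snakeF :
    cokernel (Subobject.ofLE (x ⊓ y) (z ⊓ u) (inf_le_inf hxz hyu)) ⟶
      cokernel (Subobject.ofLE x z hxz) ⊞ cokernel (Subobject.ofLE y u hyu) :=
  biprod.lift
    (cokernel.map (Subobject.ofLE (x ⊓ y) (z ⊓ u) (inf_le_inf hxz hyu))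
      (Subobject.ofLE x z hxz)
      (Subobject.ofLE (x ⊓ y) x inf_le_left)
      (Subobject.ofLE (z ⊓ u) z inf_le_left)
      (by simp [Subobject.ofLE_comp_ofLE]))
    (-(cokernel.map (Subobject.ofLE (x ⊓ y) (z ⊓ u) (inf_le_inf hxz hyu))
      (Subobject.ofLE y u hyu)
      (Subobject.ofLE (x ⊓ y) y inf_le_right)
      (Subobject.ofLE (z ⊓ u) u inf_le_right)
      (by simp [Subobject.ofLE_comp_ofLE])))

/-- second map of the sequence of cokernels -/
noncomputable def snakeG :
    cokernel (Subobject.ofLE x z hxz) ⊞ cokernel (Subobject.ofLE y u hyu) ⟶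
      cokernel (Subobject.ofLE (x ⊔ y) (z ⊔ u) (sup_le_sup hxz hyu)) :=
  biprod.desc
    (cokernel.map (Subobject.ofLE x z hxz)
      (Subobject.ofLE (x ⊔ y) (z ⊔ u) (sup_le_sup hxz hyu))
      (Subobject.ofLE x (x ⊔ y) le_sup_left)
      (Subobject.ofLE z (z ⊔ u) le_sup_left)
      (by simp [Subobject.ofLE_comp_ofLE]))
    (cokernel.map (Subobject.ofLE y u hyu)
      (Subobject.ofLE (x ⊔ y) (z ⊔ u) (sup_le_sup hxz hyu))
      (Subobject.ofLE y (x ⊔ y) le_sup_right)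
      (Subobject.ofLE u (z ⊔ u) le_sup_right)
      (by simp [Subobject.ofLE_comp_ofLE]))

lemma snake_w : snakeF x z y u hxz hyu ≫ snakeG x z y u hxz hyu = 0 := by
  rw [← cancel_epi (cokernel.π (Subobject.ofLE (x ⊓ y) (z ⊓ u) (inf_le_inf hxz hyu)))]
  simp [snakeF, snakeG, biprod.lift_desc, Subobject.ofLE_comp_ofLE]

/-- the short complex of cokernels -/
noncomputable abbrev L3 : ShortComplex C := ShortComplex.mk _ _ (snake_w x z y u hxz hyu)

/-- the morphism `MV x y ⟶ MV z u` -/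
noncomputable def v12 : (MV x y : ShortComplex C) ⟶ MV z u where
  τ₁ := Subobject.ofLE _ _ (inf_le_inf hxz hyu)
  τ₂ := biprod.map (Subobject.ofLE x z hxz) (Subobject.ofLE y u hyu)
  τ₃ := Subobject.ofLE _ _ (sup_le_sup hxz hyu)
  comm₁₂ := by
    apply biprod.hom_ext <;> simp [MV, MVf, Subobject.ofLE_comp_ofLE]
  comm₂₃ := by
    apply biprod.hom_ext' <;> simp [MV, MVg, Subobject.ofLE_comp_ofLE]

/-- the morphism `MV z u ⟶ L3` -/
noncomputable def v23 : (MV z u : ShortComplex C) ⟶ L3 x z y u hxz hyu where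
  τ₁ := cokernel.π _
  τ₂ := biprod.map (cokernel.π _) (cokernel.π _)
  τ₃ := cokernel.π _
  comm₁₂ := by
    apply biprod.hom_ext <;>
      simp [MV, MVf, L3, snakeF, Subobject.ofLE_comp_ofLE]
  comm₂₃ := by
    apply biprod.hom_ext' <;>
      simp [MV, MVg, L3, snakeG, Subobject.ofLE_comp_ofLE]

lemma mono_v12 : Mono (v12 x z y u hxz hyu) := by
  constructor
  intro T g h eq
  apply ShortComplex.hom_ext
  · have h1 := congrArg ShortComplex.Hom.τ₁ eq
    simp only [ShortComplex.comp_τ₁, v12] at h1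
    exact (cancel_mono _).1 h1
  · have h2 := congrArg ShortComplex.Hom.τ₂ eq
    simp only [ShortComplex.comp_τ₂, v12] at h2
    exact (cancel_mono _).1 h2
  · have h3 := congrArg ShortComplex.Hom.τ₃ eq
    simp only [ShortComplex.comp_τ₃, v12] at h3
    exact (cancel_mono _).1 h3

lemma epi_v23 : Epi (v23 x z y u hxz hyu) := by
  constructor
  intro T g h eq
  apply ShortComplex.hom_ext
  · have h1 := congrArg ShortComplex.Hom.τ₁ eq
    simp only [ShortComplex.comp_τ₁, v23] at h1
    exact (cancel_epi _).1 h1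
  · have h2 := congrArg ShortComplex.Hom.τ₂ eq
    simp only [ShortComplex.comp_τ₂, v23] at h2
    exact (cancel_epi _).1 h2
  · have h3 := congrArg ShortComplex.Hom.τ₃ eq
    simp only [ShortComplex.comp_τ₃, v23] at h3
    exact (cancel_epi _).1 h3

lemma w13 : v12 x z y u hxz hyu ≫ v23 x z y u hxz hyu = 0 := by
  apply ShortComplex.hom_ext
  · simp [v12, v23]
  · apply biprod.hom_ext' <;> simp [v12, v23]
  · simp [v12, v23]

/-- the snake input -/
noncomputable def snake : ShortComplex.SnakeInput C where
  L₀ := ShortComplex.mk (0 : (0 : C) ⟶ (0 : C)) 0 (by simp)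
  L₁ := MV x y
  L₂ := MV z u
  L₃ := L3 x z y u hxz hyu
  v₀₁ := 0
  v₁₂ := v12 x z y u hxz hyu
  v₂₃ := v23 x z y u hxz hyu
  w₀₂ := zero_comp
  w₁₃ := w13 x z y u hxz hyu
  h₀ := by
    refine KernelFork.IsLimit.ofMonoOfIsZero _ (mono_v12 x z y u hxz hyu) ?_
    rw [IsZero.iff_id_eq_zero]
    ext <;> exact (isZero_zero C).eq_of_src _ _

  h₃ := by
    have := epi_v23 x z y u hxz hyu
    refine CokernelCofork.IsColimit.ofπ' _ _ (fun {T} q hq => ?_)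
    have hq₁ : Subobject.ofLE (x ⊓ y) (z ⊓ u) (inf_le_inf hxz hyu) ≫ q.τ₁ = 0 := by
      have := congrArg ShortComplex.Hom.τ₁ hq
      simpa [v12] using this
    have hq₂ : biprod.map (Subobject.ofLE x z hxz) (Subobject.ofLE y u hyu) ≫ q.τ₂ = 0 := by
      have := congrArg ShortComplex.Hom.τ₂ hq
      simpa [v12] using this
    have hq₃ : Subobject.ofLE (x ⊔ y) (z ⊔ u) (sup_le_sup hxz hyu) ≫ q.τ₃ = 0 := by
      have := congrArg ShortComplex.Hom.τ₃ hq
      simpa [v12] using this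
    have h2l : Subobject.ofLE x z hxz ≫ biprod.inl ≫ q.τ₂ = 0 := by
      have := biprod.inl ≫= hq₂
      simpa using this
    have h2r : Subobject.ofLE y u hyu ≫ biprod.inr ≫ q.τ₂ = 0 := by
      have := biprod.inr ≫= hq₂
      simpa using this
    refine ⟨⟨cokernel.desc _ q.τ₁ hq₁,
      biprod.desc (cokernel.desc _ (biprod.inl ≫ q.τ₂) h2l)
        (cokernel.desc _ (biprod.inr ≫ q.τ₂) h2r),
      cokernel.desc _ q.τ₃ hq₃, ?_, ?_⟩, ?_⟩
    · rw [← cancel_epi (cokernel.π (Subobject.ofLE (x ⊓ y) (z ⊓ u) (inf_le_inf hxz hyu)))]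
      have hc := q.comm₁₂
      simp only [MV] at hc
      simp [L3, snakeF, biprod.lift_desc, hc, MV, MVf,
        biprod.lift_eq, Preadditive.add_comp, Preadditive.neg_comp, Category.assoc,
        Preadditive.sub_comp]
    · apply biprod.hom_ext'
      · rw [← cancel_epi (cokernel.π (Subobject.ofLE x z hxz))]
        have hc := q.comm₂₃
        simp only [MV] at hc
        simp [L3, snakeG, hc, MV, MVg, Category.assoc]
      · rw [← cancel_epi (cokernel.π (Subobject.ofLE y u hyu))]
        have hc := q.comm₂₃
        simp only [MV] at hc
        simp [L3, snakeG, hc, MV, MVg, Category.assoc]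
    · apply ShortComplex.hom_ext
      · simp [v23]
      · apply biprod.hom_ext' <;> simp [v23]
      · simp [v23]
  L₁_exact := MV_exact x y
  epi_L₁_g := epi_MVg x y
  L₂_exact := MV_exact z u
  mono_L₂_f := mono_MVf z u

end

end Stmt19Aux


/-- Let `x ≤ z` and `y ≤ u` be subobjects of an object `a` of an abelian
category, and write `t/s` for the cokernel of the inclusion `s ⟶ t` of
underlying objects of subobjects `s ≤ t`.  Then there is a short exact
sequence `0 ⟶ (z ⊓ u)/(x ⊓ y) ⟶ (z/x) ⊞ (u/y) ⟶ (z ⊔ u)/(x ⊔ y) ⟶ 0`,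
whose maps are induced by the canonical inclusions (with a sign on the
second component of the first map). -/
theorem stmt19 {C : Type*} [Category C] [Abelian C] {a : C}
    (x z y u : Subobject a) (hxz : x ≤ z) (hyu : y ≤ u) :
    ∃ hzero :
      biprod.lift
          (cokernel.map (Subobject.ofLE (x ⊓ y) (z ⊓ u) (inf_le_inf hxz hyu))
            (Subobject.ofLE x z hxz)
            (Subobject.ofLE (x ⊓ y) x inf_le_left)
            (Subobject.ofLE (z ⊓ u) z inf_le_left)
            (by simp [Subobject.ofLE_comp_ofLE]))
          (-(cokernel.map (Subobject.ofLE (x ⊓ y) (z ⊓ u) (inf_le_inf hxz hyu))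
            (Subobject.ofLE y u hyu)
            (Subobject.ofLE (x ⊓ y) y inf_le_right)
            (Subobject.ofLE (z ⊓ u) u inf_le_right)
            (by simp [Subobject.ofLE_comp_ofLE]))) ≫
        biprod.desc
          (cokernel.map (Subobject.ofLE x z hxz)
            (Subobject.ofLE (x ⊔ y) (z ⊔ u) (sup_le_sup hxz hyu))
            (Subobject.ofLE x (x ⊔ y) le_sup_left)
            (Subobject.ofLE z (z ⊔ u) le_sup_left)
            (by simp [Subobject.ofLE_comp_ofLE]))
          (cokernel.map (Subobject.ofLE y u hyu)
            (Subobject.ofLE (x ⊔ y) (z ⊔ u) (sup_le_sup hxz hyu))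
            (Subobject.ofLE y (x ⊔ y) le_sup_right)
            (Subobject.ofLE u (z ⊔ u) le_sup_right)
            (by simp [Subobject.ofLE_comp_ofLE])) = 0,
      (ShortComplex.mk _ _ hzero).ShortExact := by
  refine ⟨Stmt19Aux.snake_w x z y u hxz hyu, ?_⟩
  let S := Stmt19Aux.snake x z y u hxz hyu
  haveI : Epi S.L₂.g := Stmt19Aux.epi_MVg z u
  have hδ : S.δ = 0 := (Limits.isZero_zero C).eq_of_src _ _
  have hmono : Mono S.L₃.f := S.L₂'_exact.mono_g hδ
  have hepi : Epi S.L₃.g := S.epi_L₃_g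
  exact { exact := S.L₃_exact, mono_f := hmono, epi_g := hepi }
end
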